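/- arXiv:2512.08893 — 4 statements merged into one kernel-verified Lean document; each statement's English description precedes it below -/
import Mathlib

section
/- Let ℰ and 𝒟 be encoding and decoding superoperators with 𝒟 ∘ ℰ = id, and let ℛ be a recovery superoperator with Image(ℛ) = Image(ℰ). If every gate G in a set 𝓕 has the form G = ℛ ∘ G̃ for some linear map G̃ on B(H^n), then for all G_a, G_b ∈ 𝓕, the gadget retraction satisfies Ω[G_a ∘ G_b] = Ω[G_a] ∘ Ω[G_b]. -/
namespace LinearMap

variable {R M N P : Type*} [CommSemiring R] [AddCommMonoid M] [AddCommMonoid N]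
  [AddCommMonoid P] [Module R M] [Module R N] [Module R P]

def gadgetRetraction (D : N →ₗ[R] M) (E : M →ₗ[R] N) (G : N →ₗ[R] N) : M →ₗ[R] M :=
  D ∘ₗ G ∘ₗ E

theorem comp_comp_eq_self_of_range_le {E : M →ₗ[R] N} {D : N →ₗ[R] M}
    (hDE : D ∘ₗ E = id) {G : P →ₗ[R] N} (hG : range G ≤ range E) :
    E ∘ₗ D ∘ₗ G = G := by
  ext x
  obtain ⟨y, hy⟩ := hG (mem_range_self G x)
  simp only [comp_apply, ← hy, ← comp_apply (f := D), hDE, id_apply]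

theorem gadgetRetraction_comp {E : M →ₗ[R] N} {D : N →ₗ[R] M}
    (hDE : D ∘ₗ E = id) (Ga : N →ₗ[R] N) {Gb : N →ₗ[R] N} (hGb : range Gb ≤ range E) :
    gadgetRetraction D E (Ga ∘ₗ Gb) = gadgetRetraction D E Ga ∘ₗ gadgetRetraction D E Gb := by
  -- `E ∘ D` fixes the range of `Gb ∘ E`, so it can be inserted between `Ga` and `Gb`.
  simp only [gadgetRetraction, comp_assoc, comp_comp_eq_self_of_range_le hDE
    ((range_comp_le_range E Gb).trans hGb)]

end LinearMap

/-- Let `E` (encoding) and `D` (decoding) be superoperators with `D ∘ E = id`,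
and `R` a recovery superoperator with `range R = range E`.  If every gate `G`
in a set `F` has the form `G = R ∘ G̃`, then the gadget retraction
`Ω[G] = D ∘ G ∘ E` satisfies `Ω[Ga ∘ Gb] = Ω[Ga] ∘ Ω[Gb]` for all
`Ga, Gb ∈ F`. -/
theorem stmt9 {k n : ℕ}
    (Emap : Matrix (Fin (2^k)) (Fin (2^k)) ℂ →ₗ[ℂ] Matrix (Fin (2^n)) (Fin (2^n)) ℂ)
    (Dmap : Matrix (Fin (2^n)) (Fin (2^n)) ℂ →ₗ[ℂ] Matrix (Fin (2^k)) (Fin (2^k)) ℂ)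
    (hDE : Dmap ∘ₗ Emap = LinearMap.id)
    (Rmap : Matrix (Fin (2^n)) (Fin (2^n)) ℂ →ₗ[ℂ] Matrix (Fin (2^n)) (Fin (2^n)) ℂ)
    (hR : LinearMap.range Rmap = LinearMap.range Emap)
    (F : Set (Matrix (Fin (2^n)) (Fin (2^n)) ℂ →ₗ[ℂ] Matrix (Fin (2^n)) (Fin (2^n)) ℂ))
    (hF : ∀ G ∈ F, ∃ Gt, G = Rmap ∘ₗ Gt) :
    ∀ Ga ∈ F, ∀ Gb ∈ F,
      Dmap ∘ₗ (Ga ∘ₗ Gb) ∘ₗ Emap =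
        (Dmap ∘ₗ Ga ∘ₗ Emap) ∘ₗ (Dmap ∘ₗ Gb ∘ₗ Emap) := by
  intro Ga _ Gb hGb
  obtain ⟨Gt, rfl⟩ := hF Gb hGb
  exact LinearMap.gadgetRetraction_comp hDE Ga (hR ▸ LinearMap.range_comp_le_range Gt Rmap)
end

section
/- In the 3-qubit repetition code (stabilizers ZZI, IZZ, codewords |000⟩, |111⟩, corrections R(0,0)=III, R(1,0)=XII, R(0,1)=IIX, R(1,1)=IXI), the noisy recovery map ℛ̃ with independent ancilla bit-flip probability p ∈ (0,1) satisfies: Ω[ℛ̃] = id on single-qubit operators, but Ω[ℛ̃∘ℛ̃](Z) = (1 - 2ε) Z for some ε > 0; hence Ω[ℛ̃∘ℛ̃] ≠ Ω[ℛ̃]∘Ω[ℛ̃]. -/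
open Matrix

namespace Stmt16

noncomputable section

/-- Computational basis index for three qubits. -/
abbrev V := Fin 3 → Fin 2

/-- Encoding isometry of the 3-qubit repetition code: `|0⟩ ↦ |000⟩`,
`|1⟩ ↦ |111⟩`. -/
def Emat : Matrix V (Fin 2) ℂ :=
  Matrix.of fun v i => if v = fun _ => i then 1 else 0

/-- Sign `(-1)^b` of a bit. -/
def sgn (b : Fin 2) : ℂ := if b = 0 then 1 else -1

/-- The stabilizer `Z_i Z_j` (e.g. `ZZI` for `i = 0, j = 1`). -/
def ZZ (i j : Fin 3) : Matrix V V ℂ :=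
  Matrix.diagonal fun v => sgn (v i) * sgn (v j)

/-- Bit flip `X` on qubit `i`. -/
def Xop (i : Fin 3) : Matrix V V ℂ :=
  Matrix.of fun v w => if v = Function.update w i (w i + 1) then 1 else 0

/-- Syndromes are pairs of bits (eigenvalue bits of `ZZI` and `IZZ`). -/
abbrev Syn := Fin 2 × Fin 2

/-- The corrections: `R(0,0)=III`, `R(1,0)=XII`, `R(0,1)=IIX`, `R(1,1)=IXI`. -/
def corr (s : Syn) : Matrix V V ℂ :=
  if s = (0, 0) then 1
  else if s = (1, 0) then Xop 0
  else if s = (0, 1) then Xop 2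
  else Xop 1

/-- The syndrome projector for syndrome `s`. -/
def proj (s : Syn) : Matrix V V ℂ :=
  ((2 : ℂ)⁻¹ • (1 + sgn s.1 • ZZ 0 1)) * ((2 : ℂ)⁻¹ • (1 + sgn s.2 • ZZ 1 2))

/-- Hamming distance between two 2-bit syndromes. -/
def ham (s s' : Syn) : ℕ :=
  (if s.1 = s'.1 then 0 else 1) + (if s.2 = s'.2 then 0 else 1)

/-- Syndrome confusion probabilities from independent ancilla bit flips with
probability `p`: `χ_{s,s'} = (1-p)^(2-h(s,s')) p^(h(s,s'))`. -/
def chi (p : ℝ) (s s' : Syn) : ℝ := (1 - p)^(2 - ham s s') * p^(ham s s')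

/-- The noisy recovery map `ℛ̃`. -/
def noisyR (p : ℝ) (ρ : Matrix V V ℂ) : Matrix V V ℂ :=
  ∑ s : Syn, ∑ s' : Syn, ((chi p s s' : ℝ) : ℂ) •
    (corr s' * proj s * ρ * proj s * (corr s')ᴴ)

/-- The ideal recovery map `ℛ` (the `p = 0` case). -/
def idealR (ρ : Matrix V V ℂ) : Matrix V V ℂ :=
  ∑ s : Syn, corr s * proj s * ρ * proj s * (corr s)ᴴ

/-- The gadget retraction `Ω[Λ] = ℰ† ∘ ℛ ∘ Λ ∘ ℰ`. -/
def retr (Λ : Matrix V V ℂ → Matrix V V ℂ)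
    (ρ : Matrix (Fin 2) (Fin 2) ℂ) : Matrix (Fin 2) (Fin 2) ℂ :=
  Ematᴴ * idealR (Λ (Emat * ρ * Ematᴴ)) * Emat

/-- The single-qubit Pauli `Z`. -/
def Zmat : Matrix (Fin 2) (Fin 2) ℂ := !![1, 0; 0, -1]


/-!
Every correction is an `X`-type Pauli `X^u` with `u ∈ 𝔽₂³`, and `X^u` shifts syndromes by
`syndrome u`. So a code state hit by `X^u` has a definite syndrome, and a noisy round that reads
`s'` just multiplies the error by `X^(corrVec s')`. The final ideal recovery leaves the net error
`u + corrVec (syndrome u)`, which lies in the kernel `{000, 111}` of the syndrome map: the logical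
identity or the logical `X`. After one noisy round the error is `corrVec s'` itself, which the ideal
recovery undoes exactly. After two rounds reading `a` and then `b` it is `corrVec a + corrVec b`,
and for distinct nonzero `a, b` the ideal recovery completes it to `XXX`. This happens with
positive probability `ε`, and `XXX` conjugates `Z` to `-Z`.
-/

-- `flipOp u` is the Pauli `X^u`, flipping the qubits where `u` is `1`.
def flipOp (u : V) : Matrix V V ℂ := Matrix.of fun v w => if w + u = v then 1 else 0

lemma flipOp_zero : flipOp 0 = 1 := by
  ext v w
  simp [flipOp, Matrix.one_apply, eq_comm]

lemma flipOp_mul_flipOp (u w : V) : flipOp u * flipOp w = flipOp (w + u) := by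
  ext v x
  simp [flipOp, Matrix.mul_apply, add_assoc]

lemma conjTranspose_flipOp (u : V) : (flipOp u)ᴴ = flipOp u := by
  have hneg : -u = u := by revert u; decide
  ext v w
  have : v + u = w ↔ w + u = v := by
    rw [← eq_sub_iff_add_eq, sub_eq_add_neg, hneg, eq_comm]
  simp [flipOp, this]

lemma Xop_eq_flipOp (i : Fin 3) : Xop i = flipOp (Pi.single i 1) := by
  ext v w
  have : Function.update w i (w i + 1) = w + Pi.single i 1 := by
    funext j
    by_cases h : j = i
    · subst h; simp
    · simp [h]
  simp [Xop, flipOp, this, eq_comm]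

def corrVec (s : Syn) : V :=
  if s = (0, 0) then 0
  else if s = (1, 0) then Pi.single 0 1
  else if s = (0, 1) then Pi.single 2 1
  else Pi.single 1 1

lemma corr_eq_flipOp (s : Syn) : corr s = flipOp (corrVec s) := by
  unfold corr corrVec
  split_ifs <;> simp [flipOp_zero, Xop_eq_flipOp]

def syndrome (v : V) : Syn := (v 0 + v 1, v 1 + v 2)

lemma syndrome_zero : syndrome 0 = 0 := rfl

lemma syndrome_add (v w : V) : syndrome (v + w) = syndrome v + syndrome w := by
  simp only [syndrome, Pi.add_apply, Prod.mk_add_mk, Prod.ext_iff]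
  constructor <;> abel

lemma syndrome_corrVec (s : Syn) : syndrome (corrVec s) = s := by
  revert s; decide

lemma syndrome_const (i : Fin 2) : syndrome (fun _ => i) = 0 := by
  revert i; decide

lemma half_one_add_sgn_mul_sgn (a x y : Fin 2) :
    (2 : ℂ)⁻¹ * (1 + sgn a * (sgn x * sgn y)) = if x + y = a then 1 else 0 := by
  fin_cases a <;> fin_cases x <;> fin_cases y <;> simp [sgn] <;> norm_num

lemma half_smul_one_add_sgn_smul_ZZ (a : Fin 2) (i j : Fin 3) :
    (2 : ℂ)⁻¹ • (1 + sgn a • ZZ i j) =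
      diagonal fun v => if v i + v j = a then 1 else 0 := by
  rw [ZZ, ← diagonal_one, ← diagonal_smul, diagonal_add, ← diagonal_smul]
  congr 1
  funext v
  simp [half_one_add_sgn_mul_sgn]

lemma proj_eq_diagonal (s : Syn) :
    proj s = diagonal fun v => if syndrome v = s then 1 else 0 := by
  rw [proj, half_smul_one_add_sgn_smul_ZZ, half_smul_one_add_sgn_smul_ZZ, diagonal_mul_diagonal]
  congr 1
  funext v
  simp only [syndrome, Prod.ext_iff, ite_zero_mul_ite_zero, mul_one]

lemma conjTranspose_proj (s : Syn) : (proj s)ᴴ = proj s := by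
  rw [proj_eq_diagonal, diagonal_conjTranspose]
  congr 1
  funext v
  simp [apply_ite]

lemma diagonal_mul_flipOp (d : V → ℂ) (u : V) :
    diagonal d * flipOp u = flipOp u * diagonal fun v => d (v + u) := by
  ext v w
  by_cases h : w + u = v
  · subst h; simp [flipOp]
  · simp [flipOp, h]

lemma proj_mul_flipOp (s : Syn) (u : V) :
    proj s * flipOp u = flipOp u * proj (s - syndrome u) := by
  simp only [proj_eq_diagonal, diagonal_mul_flipOp, syndrome_add, eq_sub_iff_add_eq]

lemma proj_mul_Emat (s : Syn) : proj s * Emat = if s = 0 then Emat else 0 := by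
  ext v i
  by_cases h : v = fun _ => i
  · subst h; split_ifs with hs <;> simp [proj_eq_diagonal, Emat, syndrome_const, hs, eq_comm]
  · split_ifs <;> simp [proj_eq_diagonal, Emat, h]

lemma proj_mul_flipOp_mul_Emat (s : Syn) (u : V) :
    proj s * (flipOp u * Emat) = if s = syndrome u then flipOp u * Emat else 0 := by
  rw [← Matrix.mul_assoc, proj_mul_flipOp, Matrix.mul_assoc, proj_mul_Emat]
  simp only [sub_eq_zero]
  split_ifs <;> simp

lemma const_inj_V {i j : Fin 2} : ((fun _ => i : V) = fun _ => j) ↔ i = j := Function.const_inj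

lemma conjTranspose_Emat_mul_Emat : Ematᴴ * Emat = 1 := by
  ext i j
  simp only [Matrix.mul_apply, conjTranspose_apply, Emat, of_apply]
  simp [Matrix.one_apply, const_inj_V, eq_comm]

def Xmat : Matrix (Fin 2) (Fin 2) ℂ := !![0, 1; 1, 0]

lemma flipOp_mul_Emat_apply (u v : V) (i : Fin 2) :
    (flipOp u * Emat) v i = if (fun _ => i) + u = v then 1 else 0 := by
  simp [Matrix.mul_apply, flipOp, Emat]

lemma flipOp_one_mul_Emat : flipOp 1 * Emat = Emat * Xmat := by
  ext v i
  rw [flipOp_mul_Emat_apply]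
  fin_cases i <;> simp [Matrix.mul_apply, Emat, Xmat, Fin.sum_univ_two, eq_comm] <;> rfl

-- The encoded state `σ` displaced by the bit-flip error `X^u`.
def codeState (u : V) (σ : Matrix (Fin 2) (Fin 2) ℂ) : Matrix V V ℂ :=
  flipOp u * Emat * σ * (flipOp u * Emat)ᴴ

-- A displaced code state has the definite syndrome `syndrome u`, so only the branch
-- `s = syndrome u` of the syndrome measurement survives.
lemma corr_proj_codeState (s s' : Syn) (u : V) (σ : Matrix (Fin 2) (Fin 2) ℂ) :
    corr s' * proj s * codeState u σ * proj s * (corr s')ᴴ =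
      if s = syndrome u then codeState (u + corrVec s') σ else 0 := by
  have h := proj_mul_flipOp_mul_Emat s u
  have h' : (flipOp u * Emat)ᴴ * proj s = if s = syndrome u then (flipOp u * Emat)ᴴ else 0 := by
    rw [← conjTranspose_proj, ← conjTranspose_mul, h]
    split_ifs <;> simp
  calc _ = corr s' * (proj s * (flipOp u * Emat)) * σ * ((flipOp u * Emat)ᴴ * proj s) *
          (corr s')ᴴ := by
        simp only [codeState, Matrix.mul_assoc]
    _ = _ := by
      rw [h, h']
      split_ifs
      · simp only [codeState, corr_eq_flipOp, conjTranspose_mul, conjTranspose_flipOp,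
          ← flipOp_mul_flipOp, Matrix.mul_assoc]
      · simp

lemma noisyR_sum_smul {ι : Type*} (p : ℝ) (t : Finset ι) (c : ι → ℂ)
    (X : ι → Matrix V V ℂ) :
    noisyR p (∑ i ∈ t, c i • X i) = ∑ i ∈ t, c i • noisyR p (X i) := by
  simp only [noisyR, Matrix.mul_sum, Matrix.sum_mul, Matrix.mul_smul, Matrix.smul_mul,
    Finset.smul_sum, smul_smul, mul_comm]
  conv_rhs => rw [Finset.sum_comm]
  exact Finset.sum_congr rfl fun s _ => Finset.sum_comm

lemma idealR_sum_smul {ι : Type*} (t : Finset ι) (c : ι → ℂ) (X : ι → Matrix V V ℂ) :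
    idealR (∑ i ∈ t, c i • X i) = ∑ i ∈ t, c i • idealR (X i) := by
  simp only [idealR, Matrix.mul_sum, Matrix.sum_mul, Matrix.mul_smul, Matrix.smul_mul,
    Finset.smul_sum]
  exact Finset.sum_comm

lemma noisyR_codeState (p : ℝ) (u : V) (σ : Matrix (Fin 2) (Fin 2) ℂ) :
    noisyR p (codeState u σ) =
      ∑ s', ((chi p (syndrome u) s' : ℝ) : ℂ) • codeState (u + corrVec s') σ := by
  simp only [noisyR, corr_proj_codeState, smul_ite, smul_zero]
  rw [Finset.sum_comm]
  simp

lemma idealR_codeState (u : V) (σ : Matrix (Fin 2) (Fin 2) ℂ) :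
    idealR (codeState u σ) = codeState (u + corrVec (syndrome u)) σ := by
  simp [idealR, corr_proj_codeState]

-- The bit flip left over once the ideal recovery has acted on `X^u`; it has trivial syndrome, so
-- it is `III` or the logical `XXX`.
def residual (u : V) : V := u + corrVec (syndrome u)

def logicalOp (w : V) : Matrix (Fin 2) (Fin 2) ℂ := Ematᴴ * (flipOp w * Emat)

lemma retr_eq_of_codeState (Λ : Matrix V V ℂ → Matrix V V ℂ)
    (ρ : Matrix (Fin 2) (Fin 2) ℂ)
    {ι : Type*} (t : Finset ι) (c : ι → ℂ) (u : ι → V)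
    (hΛ : Λ (codeState 0 ρ) = ∑ i ∈ t, c i • codeState (u i) ρ) :
    retr Λ ρ =
      ∑ i ∈ t, c i • (logicalOp (residual (u i)) * ρ * (logicalOp (residual (u i)))ᴴ) := by
  have h0 : Emat * ρ * Ematᴴ = codeState 0 ρ := by simp [codeState, flipOp_zero]
  simp only [retr, h0, hΛ, idealR_sum_smul, idealR_codeState, Matrix.mul_sum, Matrix.sum_mul]
  simp only [Matrix.mul_smul, Matrix.smul_mul, codeState, logicalOp, residual,
    conjTranspose_mul, conjTranspose_conjTranspose, Matrix.mul_assoc]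

lemma residual_corrVec (s : Syn) : residual (corrVec s) = 0 := by
  revert s; decide

lemma residual_eq_zero_or_one (u : V) : residual u = 0 ∨ residual u = 1 := by
  revert u; decide

lemma logicalOp_zero : logicalOp 0 = 1 := by
  rw [logicalOp, flipOp_zero, Matrix.one_mul, conjTranspose_Emat_mul_Emat]

lemma logicalOp_one : logicalOp 1 = Xmat := by
  rw [logicalOp, flipOp_one_mul_Emat, ← Matrix.mul_assoc, conjTranspose_Emat_mul_Emat,
    Matrix.one_mul]

lemma Xmat_mul_Zmat_mul_conjTranspose_Xmat : Xmat * Zmat * Xmatᴴ = -Zmat := by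
  ext i j
  fin_cases i <;> fin_cases j <;> simp [Xmat, Zmat, Matrix.mul_apply, Fin.sum_univ_two]

lemma logicalOp_residual_conj_Zmat (u : V) :
    logicalOp (residual u) * Zmat * (logicalOp (residual u))ᴴ =
      ((if residual u = 0 then 1 else -1 : ℝ) : ℂ) • Zmat := by
  rcases residual_eq_zero_or_one u with h | h
  · simp [h, logicalOp_zero]
  · have h1 : (1 : V) ≠ 0 := by decide
    simp [h, h1, logicalOp_one, Xmat_mul_Zmat_mul_conjTranspose_Xmat]

lemma sum_chi (p : ℝ) (s : Syn) : ∑ s', chi p s s' = 1 := by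
  rcases s with ⟨a, b⟩
  fin_cases a <;> fin_cases b <;> simp [Fintype.sum_prod_type, chi, ham] <;> ring

lemma chi_pos {p : ℝ} (hp : 0 < p) (hp1 : p < 1) (s s' : Syn) : 0 < chi p s s' := by
  have : 0 < 1 - p := by linarith
  unfold chi; positivity

lemma retr_noisyR (p : ℝ) (ρ : Matrix (Fin 2) (Fin 2) ℂ) : retr (noisyR p) ρ = ρ := by
  rw [retr_eq_of_codeState (noisyR p) ρ Finset.univ _ _ (noisyR_codeState p 0 ρ)]
  simp only [syndrome_zero, zero_add, residual_corrVec, logicalOp_zero, conjTranspose_one,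
    Matrix.one_mul, Matrix.mul_one, ← Finset.sum_smul, ← Complex.ofReal_sum, sum_chi,
    Complex.ofReal_one, one_smul]

-- The first noisy round reads the syndrome `a` of a code state (true syndrome `0`), the second
-- reads `b` of a state with true syndrome `a`.
def twoRoundWeight (p : ℝ) (ab : Syn × Syn) : ℝ := chi p 0 ab.1 * chi p ab.1 ab.2

lemma noisyR_noisyR_codeState_zero (p : ℝ) (ρ : Matrix (Fin 2) (Fin 2) ℂ) :
    noisyR p (noisyR p (codeState 0 ρ)) =
      ∑ ab, ((twoRoundWeight p ab : ℝ) : ℂ) •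
        codeState (corrVec ab.1 + corrVec ab.2) ρ := by
  rw [Fintype.sum_prod_type]
  simp only [noisyR_codeState, noisyR_sum_smul, syndrome_zero, zero_add, syndrome_corrVec,
    Finset.smul_sum, smul_smul, twoRoundWeight, Complex.ofReal_mul]

def twoRoundFailure (p : ℝ) : ℝ :=
  ∑ ab, if residual (corrVec ab.1 + corrVec ab.2) = 0 then 0 else twoRoundWeight p ab

lemma sum_twoRoundWeight (p : ℝ) : ∑ ab, twoRoundWeight p ab = 1 := by
  rw [Fintype.sum_prod_type]
  simp only [twoRoundWeight, ← Finset.mul_sum, sum_chi, mul_one]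

lemma twoRoundFailure_pos {p : ℝ} (hp : 0 < p) (hp1 : p < 1) : 0 < twoRoundFailure p := by
  have hw : ∀ ab, 0 < twoRoundWeight p ab := fun ab =>
    mul_pos (chi_pos hp hp1 _ _) (chi_pos hp hp1 _ _)
  refine Finset.sum_pos' (fun ab _ => ite_nonneg le_rfl (hw ab).le)
    ⟨((1, 0), (0, 1)), Finset.mem_univ _, ?_⟩
  rw [if_neg (by decide)]
  exact hw _

lemma retr_noisyR_noisyR_Zmat (p : ℝ) :
    retr (fun x => noisyR p (noisyR p x)) Zmat =
      ((1 - 2 * twoRoundFailure p : ℝ) : ℂ) • Zmat := by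
  rw [retr_eq_of_codeState _ Zmat Finset.univ _ _ (noisyR_noisyR_codeState_zero p Zmat)]
  simp only [logicalOp_residual_conj_Zmat, smul_smul, ← Complex.ofReal_mul,
    ← Finset.sum_smul, ← Complex.ofReal_sum]
  congr 2
  rw [twoRoundFailure, Finset.mul_sum]
  conv_rhs => rw [← sum_twoRoundWeight p, ← Finset.sum_sub_distrib]
  refine Finset.sum_congr rfl fun ab _ => ?_
  split_ifs <;> ring

/-- In the 3-qubit repetition code with ancilla bit-flip probability
`p ∈ (0,1)`, one round of noisy recovery retracts to the identity logical
channel, but two rounds shrink the logical `Z` polarization: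
`Ω[ℛ̃∘ℛ̃](Z) = (1-2ε) Z` with `ε > 0`.  Hence
`Ω[ℛ̃∘ℛ̃] ≠ Ω[ℛ̃] ∘ Ω[ℛ̃]`: logical gate composability fails. -/
theorem stmt16 (p : ℝ) (hp : 0 < p) (hp1 : p < 1) :
    (∀ ρ, retr (noisyR p) ρ = ρ) ∧
    (∃ ε : ℝ, 0 < ε ∧
      retr (fun x => noisyR p (noisyR p x)) Zmat = ((1 - 2*ε : ℝ) : ℂ) • Zmat) ∧
    retr (fun x => noisyR p (noisyR p x)) ≠
      fun ρ => retr (noisyR p) (retr (noisyR p) ρ) := by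
  refine ⟨retr_noisyR p, ⟨_, twoRoundFailure_pos hp hp1, retr_noisyR_noisyR_Zmat p⟩,
    fun h => ?_⟩
  have hZ := congrFun h Zmat
  rw [retr_noisyR_noisyR_Zmat, retr_noisyR, retr_noisyR] at hZ
  have hε : twoRoundFailure p = 0 := by simpa [Zmat] using congrFun (congrFun hZ 0) 0
  exact (twoRoundFailure_pos hp hp1).ne' hε

end

end Stmt16
end

section
/- If Q : A* → [0,1] is button-theoretically Markovian for a gate set 𝒢 over H^n whose states have the form ℰ(ρ_L), effects have the form 𝒟†(E_L), and whose gates are {G_i}, then Q is button-theoretically Markovian for the logical gate set 𝒢_L = ({ρ_L}, {Ω[G_i]}, {E_L}) over H^k if and only if the set {G_i} is logical gate composable for Ω (i.e., Ω[G_a ∘ G_b] = Ω[G_a] ∘ Ω[G_b] for all a, b, extended to arbitrary finite compositions). -/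
/-!
The probabilities predicted by the physical gate set are those of the circuit
`𝒟 ∘ G_{β_i} ∘ ⋯ ∘ G_{β₁} ∘ ℰ`, and those predicted by the logical gate set are those of
`Ω[G_{β_i}] ∘ ⋯ ∘ Ω[G_{β₁}]`. Both are linear maps of the logical input state, and the
logical states and effects are tomographically complete, so the two families of probabilities
agree exactly when the two linear maps agree for every sequence of gates.
-/

namespace Stmt18

/-- Apply a list of gates (given by their labels) from left to right. -/
def applyList {M : Type*} {ι : Type*} (G : ι → (M → M)) (l : List ι) (x : M) : M :=
  l.foldl (fun y i => G i y) x

section ListComp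

variable {R M ι : Type*} [Semiring R] [AddCommMonoid M] [Module R M]

def listComp (F : ι → M →ₗ[R] M) : List ι → M →ₗ[R] M
  | [] => LinearMap.id
  | i :: l => listComp F l ∘ₗ F i

theorem applyList_eq_listComp (F : ι → M →ₗ[R] M) (l : List ι) (x : M) :
    applyList (fun i => ⇑(F i)) l x = listComp F l x := by
  induction l generalizing x with
  | nil => rfl
  | cons i l ih => exact ih (F i x)

end ListComp

theorem Matrix.eq_of_span_eq_top_of_trace_mul_eq {R m ι : Type*} [CommSemiring R] [Fintype m]
    [DecidableEq m] {v : ι → Matrix m m R} (hv : Submodule.span R (Set.range v) = ⊤)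
    {A B : Matrix m m R} (h : ∀ i, (v i * A).trace = (v i * B).trace) : A = B := by
  have hlin : (Matrix.traceLinearMap m R R ∘ₗ LinearMap.mulRight R A) =
      Matrix.traceLinearMap m R R ∘ₗ LinearMap.mulRight R B :=
    LinearMap.ext_on_range hv h
  exact Matrix.ext_iff_trace_mul_left.2 fun x => LinearMap.congr_fun hlin x

theorem stmt18_general {k n : ℕ} {ιs ιg ιe : Type*}
    (Emap : Matrix (Fin (2^k)) (Fin (2^k)) ℂ →ₗ[ℂ] Matrix (Fin (2^n)) (Fin (2^n)) ℂ)
    (Dmap : Matrix (Fin (2^n)) (Fin (2^n)) ℂ →ₗ[ℂ] Matrix (Fin (2^k)) (Fin (2^k)) ℂ)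
    (ρL : ιs → Matrix (Fin (2^k)) (Fin (2^k)) ℂ)
    (EL : ιe → Matrix (Fin (2^k)) (Fin (2^k)) ℂ)
    (G : ιg → (Matrix (Fin (2^n)) (Fin (2^n)) ℂ →ₗ[ℂ] Matrix (Fin (2^n)) (Fin (2^n)) ℂ))
    (hspanS : Submodule.span ℂ (Set.range ρL) = ⊤)
    (hspanE : Submodule.span ℂ (Set.range EL) = ⊤)
    (Q : ιs × List ιg × ιe → ℂ)
    -- Q is button-theoretically Markovian for the physical gate set 𝒢:
    (hQ : ∀ (α : ιs) (l : List ιg) (e : ιe),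
      Q (α, l, e) =
        (EL e * Dmap (applyList (fun i => ⇑(G i)) l (Emap (ρL α)))).trace) :
    -- Q is button-theoretically Markovian for the logical gate set 𝒢_L ...
    (∀ (α : ιs) (l : List ιg) (e : ιe),
      Q (α, l, e) =
        (EL e * applyList (fun i x => Dmap (G i (Emap x))) l (ρL α)).trace) ↔
    -- ... iff the gates are logical gate composable for Ω:
    (∀ (l : List ιg) (ρ : Matrix (Fin (2^k)) (Fin (2^k)) ℂ),
      Dmap (applyList (fun i => ⇑(G i)) l (Emap ρ)) =
        applyList (fun i x => Dmap (G i (Emap x))) l ρ) := by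
  let Ω := fun i => Dmap ∘ₗ G i ∘ₗ Emap
  change (∀ α l e, Q (α, l, e) = (EL e * applyList (fun i => ⇑(Ω i)) l (ρL α)).trace) ↔
    ∀ l ρ, Dmap (applyList (fun i => ⇑(G i)) l (Emap ρ)) = applyList (fun i => ⇑(Ω i)) l ρ
  simp only [applyList_eq_listComp] at hQ ⊢
  refine ⟨fun hL l => ?_, fun hcomp α l e => by rw [hQ, hcomp]⟩
  have hstates : ∀ α, Dmap (listComp G l (Emap (ρL α))) = listComp Ω l (ρL α) := fun α =>
    Matrix.eq_of_span_eq_top_of_trace_mul_eq hspanE fun e => by rw [← hQ, hL]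
  exact LinearMap.congr_fun (LinearMap.ext_on_range hspanS hstates :
    Dmap ∘ₗ listComp G l ∘ₗ Emap = listComp Ω l)

/-- Suppose `Q : A* → [0,1]` is button-theoretically Markovian for a physical
gate set over `H^n` whose state preparations are `ℰ(ρ_L α)`, whose effects are
`𝒟†(E_L e)` (so that the predicted probability of the circuit
`(α, β₁…β_i, e)` is `Tr(E_L e · 𝒟(G_{β_i} ∘ ⋯ ∘ G_{β₁}(ℰ(ρ_L α))))`), and
whose gates `G` are linear, with `𝒟 ∘ ℰ = id` and the logical states and
effects tomographically complete (spanning `B(H^k)`).  Then `Q` is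
button-theoretically Markovian for the logical gate set
`({ρ_L}, {Ω[G_i] = 𝒟 ∘ G_i ∘ ℰ}, {E_L})` if and only if the gates are
logical gate composable for `Ω`, extended to arbitrary finite compositions:
`Ω[G_{β_i} ∘ ⋯ ∘ G_{β₁}] = Ω[G_{β_i}] ∘ ⋯ ∘ Ω[G_{β₁}]` for every list. -/
theorem stmt18 {k n : ℕ} {ιs ιg ιe : Type*}
    (Emap : Matrix (Fin (2^k)) (Fin (2^k)) ℂ →ₗ[ℂ] Matrix (Fin (2^n)) (Fin (2^n)) ℂ)
    (Dmap : Matrix (Fin (2^n)) (Fin (2^n)) ℂ →ₗ[ℂ] Matrix (Fin (2^k)) (Fin (2^k)) ℂ)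
    (hDE : ∀ x, Dmap (Emap x) = x)
    (ρL : ιs → Matrix (Fin (2^k)) (Fin (2^k)) ℂ)
    (EL : ιe → Matrix (Fin (2^k)) (Fin (2^k)) ℂ)
    (G : ιg → (Matrix (Fin (2^n)) (Fin (2^n)) ℂ →ₗ[ℂ] Matrix (Fin (2^n)) (Fin (2^n)) ℂ))
    (hspanS : Submodule.span ℂ (Set.range ρL) = ⊤)
    (hspanE : Submodule.span ℂ (Set.range EL) = ⊤)
    (Q : ιs × List ιg × ιe → ℂ)
    -- Q is button-theoretically Markovian for the physical gate set 𝒢: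
    (hQ : ∀ (α : ιs) (l : List ιg) (e : ιe),
      Q (α, l, e) =
        (EL e * Dmap (applyList (fun i => ⇑(G i)) l (Emap (ρL α)))).trace) :
    -- Q is button-theoretically Markovian for the logical gate set 𝒢_L ...
    (∀ (α : ιs) (l : List ιg) (e : ιe),
      Q (α, l, e) =
        (EL e * applyList (fun i x => Dmap (G i (Emap x))) l (ρL α)).trace) ↔
    -- ... iff the gates are logical gate composable for Ω:
    (∀ (l : List ιg) (ρ : Matrix (Fin (2^k)) (Fin (2^k)) ℂ),
      Dmap (applyList (fun i => ⇑(G i)) l (Emap ρ)) =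
        applyList (fun i x => Dmap (G i (Emap x))) l ρ) :=
  stmt18_general Emap Dmap ρL EL G hspanS hspanE Q hQ

end Stmt18
end

section
/- Under the encoding unitary U_E defined by U_E(|s⟩⊗|ψ⟩) = R(s)† E|ψ⟩, the partial trace over the syndrome factor of the conjugated state equals the decoding operation: Tr_Syn(U_E† ρ U_E) = E† ℛ(ρ) E for all operators ρ on H^n, where ℛ(ρ) = Σ_s R(s) Π_s ρ Π_s R(s)† and Π_s = R(s)† EE† R(s). -/
open Matrix

/-! Each syndrome block of `U` is the isometry `(R s)ᴴ E`, so tracing out the syndrome of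
`Uᴴ ρ U` gives `∑ s, Eᴴ R s ρ (R s)ᴴ E`. On the other side, `E Eᴴ` is absorbed by `Eᴴ` on the
left and by `E` on the right because `Eᴴ E = 1`, and the remaining factors `R s (R s)ᴴ` cancel. -/

namespace Matrix

variable {ι σ κ α : Type*} [Fintype ι] [Fintype σ]

theorem partialTrace_conjTranspose_mul_mul [NonUnitalNonAssocSemiring α] [Star α]
    (U : Matrix ι (σ × κ) α) (B : σ → Matrix ι κ α) (hU : ∀ v s j, U v (s, j) = B s v j)
    (ρ : Matrix ι ι α) :
    (of fun i j : κ => ∑ s, (Uᴴ * ρ * U) (s, i) (s, j)) = ∑ s, (B s)ᴴ * ρ * B s := by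
  ext i j
  simp only [of_apply, sum_apply, mul_apply, conjTranspose_apply, hU]

variable [Fintype κ] [DecidableEq ι] [DecidableEq κ]

theorem conjTranspose_mul_conj_projection_mul [Semiring α] [Star α]
    (E : Matrix ι κ α) (hE : Eᴴ * E = 1) (R : Matrix ι ι α) (hR : R * Rᴴ = 1)
    (ρ : Matrix ι ι α) :
    Eᴴ * (R * (Rᴴ * (E * Eᴴ) * R) * ρ * (Rᴴ * (E * Eᴴ) * R) * Rᴴ) * E =
      Eᴴ * R * ρ * (Rᴴ * E) := by
  have hRE : Eᴴ * R * Rᴴ = Eᴴ := by rw [Matrix.mul_assoc, hR, Matrix.mul_one]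
  simp only [← Matrix.mul_assoc]
  rw [hRE, hE, Matrix.one_mul, Matrix.mul_assoc _ R Rᴴ, hR, Matrix.mul_one,
    Matrix.mul_assoc _ Eᴴ E, hE, Matrix.mul_one]

end Matrix

theorem stmt19_general {n k m : ℕ}
    (E : Matrix (Fin (2^n)) (Fin (2^k)) ℂ) (hE : Eᴴ * E = 1)
    (R : (Fin m → ZMod 2) → Matrix (Fin (2^n)) (Fin (2^n)) ℂ)
    (hRu : ∀ s, (R s)ᴴ * R s = 1 ∧ R s * (R s)ᴴ = 1)
    (U : Matrix (Fin (2^n)) ((Fin m → ZMod 2) × Fin (2^k)) ℂ)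
    (hU : ∀ (v : Fin (2^n)) (s : Fin m → ZMod 2) (j : Fin (2^k)),
      U v (s, j) = ((R s)ᴴ * E) v j) :
    ∀ ρ : Matrix (Fin (2^n)) (Fin (2^n)) ℂ,
      (Matrix.of fun i j : Fin (2^k) => ∑ s, (Uᴴ * ρ * U) (s, i) (s, j)) =
        Eᴴ * (∑ s, R s * ((R s)ᴴ * (E * Eᴴ) * R s) * ρ *
          ((R s)ᴴ * (E * Eᴴ) * R s) * (R s)ᴴ) * E := by
  intro ρ
  rw [partialTrace_conjTranspose_mul_mul U _ hU, Matrix.mul_sum, Matrix.sum_mul]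
  refine Finset.sum_congr rfl fun s _ => ?_
  rw [conjTranspose_mul_conj_projection_mul E hE (R s) (hRu s).2, conjTranspose_mul,
    conjTranspose_conjTranspose]

/-- Under the encoding unitary `U` defined by `U(|s⟩⊗|ψ⟩) = (R s)ᴴ E |ψ⟩`,
the partial trace over the syndrome factor of the conjugated state equals the
decoding operation: `Tr_Syn(Uᴴ ρ U) = Eᴴ ℛ(ρ) E` for every operator `ρ` on
`H^n`, where `ℛ(ρ) = ∑ s, R s * Π s * ρ * Π s * (R s)ᴴ` and
`Π s = (R s)ᴴ (E Eᴴ) (R s)`. -/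
theorem stmt19 {n k m : ℕ}
    (E : Matrix (Fin (2^n)) (Fin (2^k)) ℂ) (hE : Eᴴ * E = 1)
    (R : (Fin m → ZMod 2) → Matrix (Fin (2^n)) (Fin (2^n)) ℂ)
    (hRu : ∀ s, (R s)ᴴ * R s = 1 ∧ R s * (R s)ᴴ = 1)
    (hOrth : ∀ s s', (E * Eᴴ) * ((R s)ᴴ * R s') * (E * Eᴴ) =
      if s = s' then E * Eᴴ else 0)
    (hComp : ∑ s, (R s)ᴴ * (E * Eᴴ) * R s = 1)
    (U : Matrix (Fin (2^n)) ((Fin m → ZMod 2) × Fin (2^k)) ℂ)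
    (hU : ∀ (v : Fin (2^n)) (s : Fin m → ZMod 2) (j : Fin (2^k)),
      U v (s, j) = ((R s)ᴴ * E) v j) :
    ∀ ρ : Matrix (Fin (2^n)) (Fin (2^n)) ℂ,
      (Matrix.of fun i j : Fin (2^k) => ∑ s, (Uᴴ * ρ * U) (s, i) (s, j)) =
        Eᴴ * (∑ s, R s * ((R s)ᴴ * (E * Eᴴ) * R s) * ρ *
          ((R s)ᴴ * (E * Eᴴ) * R s) * (R s)ᴴ) * E :=
  stmt19_general E hE R hRu U hU
end
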